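/- If an assignment x admits an improving cycle, then the assignment y obtained by implementing the cycle (decreasing each x_{k,o_k} by ε = min_k x_{k,o_k} and increasing each x_{k, o_{k−1}} by ε, with o_0 = o_K) R-dominates x. Consequently, every Rawlsian assignment is sd-efficient. -/

import Mathlib

open Finset

/-- An n×n matrix with nonnegative real entries whose rows and columns each sum to 1. -/
def Bistochastic {n : ℕ} (x : Fin n → Fin n → ℝ) : Prop :=
  (∀ i o, 0 ≤ x i o) ∧ (∀ i, ∑ o, x i o = 1) ∧ (∀ o, ∑ i, x i o = 1)

/-- `tailProb rank x i k` = probability that agent `i` receives an object ranked `k`-th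
or worse (ranks are 0-indexed: rank 0 = most preferred). -/
def tailProb {n : ℕ} (rank : Fin n → Fin n → Fin n) (x : Fin n → Fin n → ℝ)
    (i k : Fin n) : ℝ :=
  ∑ o ∈ Finset.univ.filter (fun o => k ≤ rank i o), x i o

/-- The values of `v` rearranged in non-increasing order. -/
noncomputable def sortedDesc {n : ℕ} (v : Fin n → ℝ) : Fin n → ℝ :=
  fun j => v (Tuple.sort (fun i => -v i) j)

/-- Block `t` of `Bvec rank x` is the non-increasing rearrangement of the tail
probabilities at threshold `n-1-t`; so blocks run from the worst rank down. -/
noncomputable def Bvec {n : ℕ} (rank : Fin n → Fin n → Fin n) (x : Fin n → Fin n → ℝ) :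
    Fin n → Fin n → ℝ :=
  fun t => sortedDesc (fun i => tailProb rank x i t.rev)

/-- Lexicographic strict order on doubly-indexed vectors (outer index first). -/
def BlockLexLt {α β : Type*} [LinearOrder α] [LinearOrder β] (u v : α → β → ℝ) : Prop :=
  ∃ t s, u t s < v t s ∧ ∀ t' s', (t' < t ∨ (t' = t ∧ s' < s)) → u t' s' = v t' s'

/-- `x` Rawlsian-dominates `y`. -/
def RDom {n : ℕ} (rank : Fin n → Fin n → Fin n) (x y : Fin n → Fin n → ℝ) : Prop :=
  BlockLexLt (Bvec rank x) (Bvec rank y)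

/-- A Rawlsian assignment: a bistochastic matrix not R-dominated by any other. -/
def Rawlsian {n : ℕ} (rank : Fin n → Fin n → Fin n) (x : Fin n → Fin n → ℝ) : Prop :=
  Bistochastic x ∧ ∀ y, Bistochastic y → ¬ RDom rank y x

/-- `y` stochastically dominates `x` (w.r.t. the ranks): for every agent and every
object, the probability of an object weakly preferred to it is weakly larger, and `y ≠ x`. -/
def SDDominates {n : ℕ} (rank : Fin n → Fin n → Fin n) (y x : Fin n → Fin n → ℝ) : Prop :=
  y ≠ x ∧ ∀ i o, (∑ o' ∈ Finset.univ.filter (fun o' => rank i o' ≤ rank i o), x i o') ≤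
    ∑ o' ∈ Finset.univ.filter (fun o' => rank i o' ≤ rank i o), y i o'

/-- `x` is sd-efficient: no bistochastic matrix stochastically dominates it. -/
def SDEfficient {n : ℕ} (rank : Fin n → Fin n → Fin n) (x : Fin n → Fin n → ℝ) : Prop :=
  ¬ ∃ y, Bistochastic y ∧ SDDominates rank y x

/-- `x` admits an improving cycle: distinct agents `a 0,…,a K` and distinct objects
`ob 0,…,ob K` with `x (a k) (ob k) > 0` and each agent `a k` strictly preferring
`ob (k-1)` (cyclically) to `ob k`. -/
def HasImprovingCycle {n : ℕ} (rank : Fin n → Fin n → Fin n) (x : Fin n → Fin n → ℝ) : Prop :=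
  ∃ K : ℕ, ∃ a ob : Fin (K + 1) → Fin n, Function.Injective a ∧ Function.Injective ob ∧
    (∀ k, 0 < x (a k) (ob k)) ∧ ∀ k, rank (a k) (ob (k - 1)) < rank (a k) (ob k)

lemma sortedDesc_antitone {n : ℕ} (v : Fin n → ℝ) : Antitone (sortedDesc v) := by
  intro i j hij
  have h := Tuple.monotone_sort (fun i => -v i) hij
  simpa [sortedDesc] using h

lemma card_filter_sortedDesc {n : ℕ} (v : Fin n → ℝ) (c : ℝ) :
    (univ.filter fun s => c ≤ sortedDesc v s).card = (univ.filter fun i => c ≤ v i).card := by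
  apply Finset.card_nbij' (fun s => Tuple.sort (fun i => -v i) s)
    (fun i => (Tuple.sort (fun i => -v i)).symm i) <;>
    intro x hx <;> simp only [Finset.coe_filter, Finset.mem_univ, true_and, Set.mem_setOf_eq] at hx ⊢ <;> simp_all [sortedDesc]

lemma sortedDesc_mono {n : ℕ} {v w : Fin n → ℝ} (h : ∀ i, v i ≤ w i) (j : Fin n) :
    sortedDesc v j ≤ sortedDesc w j := by
  by_contra hlt
  push_neg at hlt
  set c := sortedDesc v j with hc
  have h1 : Finset.Iic j ⊆ univ.filter fun s => c ≤ sortedDesc v s := by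
    intro s hs
    simp only [mem_filter, mem_univ, true_and]
    exact sortedDesc_antitone v (Finset.mem_Iic.1 hs)
  have h2 : (univ.filter fun s => c ≤ sortedDesc w s) ⊆ Finset.Iio j := by
    intro s hs
    simp only [mem_filter, mem_univ, true_and] at hs
    rw [Finset.mem_Iio]
    by_contra hs'
    push_neg at hs'
    exact absurd (hs.trans (sortedDesc_antitone w hs')) (not_le.2 hlt)
  have h3 : (univ.filter fun i => c ≤ v i) ⊆ univ.filter fun i => c ≤ w i := by
    intro i hi
    simp only [mem_filter, mem_univ, true_and] at hi ⊢
    exact hi.trans (h i)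
  have := (Finset.card_le_card h1).trans <| (card_filter_sortedDesc v c).le.trans <|
    (Finset.card_le_card h3).trans <| (card_filter_sortedDesc w c).ge.trans <|
    Finset.card_le_card h2
  simp [Fin.card_Iic, Fin.card_Iio] at this

lemma sortedDesc_sum {n : ℕ} (v : Fin n → ℝ) : ∑ j, sortedDesc v j = ∑ i, v i :=
  Equiv.sum_comp (Tuple.sort (fun i => -v i)) v

lemma cycle_key {n K : ℕ} (rank : Fin n → Fin n → Fin n)
    (x : Fin n → Fin n → ℝ) (hx : Bistochastic x)
    (a ob : Fin (K + 1) → Fin n) (ha : Function.Injective a) (hob : Function.Injective ob)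
    (hpos : ∀ k, 0 < x (a k) (ob k))
    (himp : ∀ k, rank (a k) (ob (k - 1)) < rank (a k) (ob k))
    (ε : ℝ) (hε : IsLeast (Set.range fun k => x (a k) (ob k)) ε)
    (y : Fin n → Fin n → ℝ)
    (hy : ∀ i o, y i o = x i o
      + (if ∃ k, a k = i ∧ ob (k - 1) = o then ε else 0)
      - (if ∃ k, a k = i ∧ ob k = o then ε else 0)) :
    Bistochastic y ∧ RDom rank y x := by
  obtain ⟨⟨k₀, hk₀⟩, hlb⟩ := hε
  have εpos : 0 < ε := hk₀ ▸ hpos k₀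
  have εle : ∀ k, ε ≤ x (a k) (ob k) := fun k => hlb ⟨k, rfl⟩
  have hc1 : ∀ (k : Fin (K+1)) o, (∃ k', a k' = a k ∧ ob (k' - 1) = o) ↔ o = ob (k-1) := by
    intro k o
    constructor
    · rintro ⟨k', hk', ho⟩
      rw [← ho, ha hk']
    · rintro rfl; exact ⟨k, rfl, rfl⟩
  have hc2 : ∀ (k : Fin (K+1)) o, (∃ k', a k' = a k ∧ ob k' = o) ↔ o = ob k := by
    intro k o
    constructor
    · rintro ⟨k', hk', ho⟩
      rw [← ho, ha hk']
    · rintro rfl; exact ⟨k, rfl, rfl⟩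
  -- Bistochasticity of y
  have hnn : ∀ i o, 0 ≤ y i o := by
    intro i o
    rw [hy]
    by_cases h2 : ∃ k, a k = i ∧ ob k = o
    · obtain ⟨k, hk, ho⟩ := h2
      have hle := εle k
      rw [hk, ho] at hle
      have := hx.1 i o
      split_ifs <;> linarith
    · rw [if_neg h2]
      have := hx.1 i o
      split_ifs <;> linarith
  have hrow : ∀ i, ∑ o, y i o = 1 := by
    intro i
    simp only [hy]
    rw [Finset.sum_sub_distrib, Finset.sum_add_distrib, hx.2.1 i]
    by_cases hi : ∃ k, a k = i
    · obtain ⟨k, rfl⟩ := hi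
      rw [Finset.sum_congr rfl (fun o _ => if_congr (hc1 k o) rfl rfl),
        Finset.sum_congr rfl (fun o _ => if_congr (hc2 k o) rfl rfl)]
      simp
    · push_neg at hi
      rw [Finset.sum_eq_zero, Finset.sum_eq_zero]
      · ring
      · exact fun o _ => if_neg (fun ⟨k, hk, _⟩ => hi k hk)
      · exact fun o _ => if_neg (fun ⟨k, hk, _⟩ => hi k hk)
  have hcol : ∀ o, ∑ i, y i o = 1 := by
    intro o
    simp only [hy]
    rw [Finset.sum_sub_distrib, Finset.sum_add_distrib, hx.2.2 o]
    by_cases ho : ∃ j, ob j = o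
    · obtain ⟨j, rfl⟩ := ho
      have hd1 : ∀ i : Fin n, (∃ k, a k = i ∧ ob (k - 1) = ob j) ↔ i = a (j+1) := by
        intro i
        constructor
        · rintro ⟨k, rfl, hk⟩
          have hkj : k - 1 = j := hob hk
          have : k = j + 1 := eq_add_of_sub_eq hkj
          rw [this]
        · rintro rfl
          exact ⟨j + 1, rfl, by rw [add_sub_cancel_right]⟩
      have hd2 : ∀ i : Fin n, (∃ k, a k = i ∧ ob k = ob j) ↔ i = a j := by
        intro i
        constructor
        · rintro ⟨k, rfl, hk⟩
          rw [hob hk]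
        · rintro rfl; exact ⟨j, rfl, rfl⟩
      rw [Finset.sum_congr rfl (fun i _ => if_congr (hd1 i) rfl rfl),
        Finset.sum_congr rfl (fun i _ => if_congr (hd2 i) rfl rfl)]
      simp
    · push_neg at ho
      rw [Finset.sum_eq_zero, Finset.sum_eq_zero]
      · ring
      · exact fun i _ => if_neg (fun ⟨k, _, hk⟩ => ho _ hk)
      · exact fun i _ => if_neg (fun ⟨k, _, hk⟩ => ho _ hk)
  refine ⟨⟨hnn, hrow, hcol⟩, ?_⟩
  -- tail probability comparison
  have htail_eq : ∀ (k : Fin (K+1)) (t : Fin n),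
      tailProb rank y (a k) t = tailProb rank x (a k) t
        + (if t ≤ rank (a k) (ob (k-1)) then ε else 0)
        - (if t ≤ rank (a k) (ob k) then ε else 0) := by
    intro k t
    unfold tailProb
    simp only [hy]
    rw [Finset.sum_sub_distrib, Finset.sum_add_distrib,
      Finset.sum_congr rfl (fun o _ => if_congr (hc1 k o) rfl rfl),
      Finset.sum_congr rfl (fun o _ => if_congr (hc2 k o) rfl rfl),
      Finset.sum_ite_eq' _ (ob (k-1)) (fun _ => ε),
      Finset.sum_ite_eq' _ (ob k) (fun _ => ε)]
    simp [Finset.mem_filter]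
  have htail_le : ∀ (i : Fin n) (t : Fin n), tailProb rank y i t ≤ tailProb rank x i t := by
    intro i t
    by_cases hi : ∃ k, a k = i
    · obtain ⟨k, rfl⟩ := hi
      rw [htail_eq k t]
      have himk := himp k
      split_ifs with h1 h2 h2 <;> try linarith
      exact absurd (h1.trans himk.le) h2
    · push_neg at hi
      unfold tailProb
      apply le_of_eq
      apply Finset.sum_congr rfl
      intro o _
      rw [hy, if_neg (fun ⟨k, hk, _⟩ => hi k hk), if_neg (fun ⟨k, hk, _⟩ => hi k hk)]
      ring
  have hstrict : tailProb rank y (a 0) (rank (a 0) (ob 0)) <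
      tailProb rank x (a 0) (rank (a 0) (ob 0)) := by
    rw [htail_eq 0 _]
    rw [if_neg (not_le.2 (himp 0)), if_pos le_rfl]
    linarith
  -- Bvec comparison
  have hB_le : ∀ t s, Bvec rank y t s ≤ Bvec rank x t s := by
    intro t s
    exact sortedDesc_mono (fun i => htail_le i t.rev) s
  set t₀ : Fin n := (rank (a 0) (ob 0)).rev with ht₀
  have hsum : ∑ s, Bvec rank y t₀ s < ∑ s, Bvec rank x t₀ s := by
    unfold Bvec
    rw [sortedDesc_sum, sortedDesc_sum, ht₀, Fin.rev_rev]
    exact Finset.sum_lt_sum (fun i _ => htail_le i _) ⟨a 0, mem_univ _, hstrict⟩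
  have hTne : ∃ s, Bvec rank y t₀ s ≠ Bvec rank x t₀ s := by
    by_contra h
    push_neg at h
    exact absurd (Finset.sum_congr rfl fun s _ => h s) (ne_of_lt hsum)
  set T : Finset (Fin n) := univ.filter (fun t => ∃ s, Bvec rank y t s ≠ Bvec rank x t s)
    with hT
  have hTne' : T.Nonempty := ⟨t₀, by simpa [hT] using hTne⟩
  set t : Fin n := T.min' hTne' with htdef
  have htT : t ∈ T := T.min'_mem hTne'
  simp only [hT, mem_filter, mem_univ, true_and] at htT
  set S : Finset (Fin n) := univ.filter (fun s => Bvec rank y t s ≠ Bvec rank x t s) with hS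
  have hSne : S.Nonempty := by
    obtain ⟨s, hs⟩ := htT
    exact ⟨s, by simpa [hS] using hs⟩
  set s : Fin n := S.min' hSne with hsdef
  have hsS : s ∈ S := S.min'_mem hSne
  simp only [hS, mem_filter, mem_univ, true_and] at hsS
  refine ⟨t, s, lt_of_le_of_ne (hB_le t s) hsS, ?_⟩
  rintro t' s' (ht' | ⟨rfl, hs'⟩)
  · by_contra hne
    have : t' ∈ T := by simp [hT]; exact ⟨s', hne⟩
    exact absurd (T.min'_le t' this) (not_le.2 ht')
  · by_contra hne
    have : s' ∈ S := by simp [hS]; exact hne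
    exact absurd (S.min'_le s' this) (not_le.2 hs')

/-- Implementing an improving cycle yields an assignment that R-dominates the original;
consequently (given the Bogomolnaia–Moulin characterization of sd-efficiency by absence
of improving cycles), every Rawlsian assignment is sd-efficient. -/
theorem improving_cycle_rdominates {n K : ℕ} (rank : Fin n → Fin n → Fin n)
    (hrank : ∀ i, Function.Bijective (rank i))
    (x : Fin n → Fin n → ℝ) (hx : Bistochastic x)
    (a ob : Fin (K + 1) → Fin n) (ha : Function.Injective a) (hob : Function.Injective ob)
    (hpos : ∀ k, 0 < x (a k) (ob k))
    (himp : ∀ k, rank (a k) (ob (k - 1)) < rank (a k) (ob k))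
    (ε : ℝ) (hε : IsLeast (Set.range fun k => x (a k) (ob k)) ε)
    (y : Fin n → Fin n → ℝ)
    (hy : ∀ i o, y i o = x i o
      + (if ∃ k, a k = i ∧ ob (k - 1) = o then ε else 0)
      - (if ∃ k, a k = i ∧ ob k = o then ε else 0))
    (hBM : ∀ z : Fin n → Fin n → ℝ, Bistochastic z →
      (SDEfficient rank z ↔ ¬ HasImprovingCycle rank z)) :
    RDom rank y x ∧ ∀ z : Fin n → Fin n → ℝ, Rawlsian rank z → SDEfficient rank z := by
  refine ⟨(cycle_key rank x hx a ob ha hob hpos himp ε hε y hy).2, ?_⟩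
  rintro z ⟨hzB, hzND⟩
  rw [hBM z hzB]
  rintro ⟨K', a', ob', ha', hob', hpos', himp'⟩
  obtain ⟨k₀, -, hk₀⟩ := Finset.exists_min_image Finset.univ
    (fun k => z (a' k) (ob' k)) ⟨0, Finset.mem_univ 0⟩
  have hε' : IsLeast (Set.range fun k => z (a' k) (ob' k)) (z (a' k₀) (ob' k₀)) :=
    ⟨⟨k₀, rfl⟩, by rintro _ ⟨k, rfl⟩; exact hk₀ k (Finset.mem_univ k)⟩
  obtain ⟨hyB, hyR⟩ := cycle_key rank z hzB a' ob' ha' hob' hpos' himp'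
    (z (a' k₀) (ob' k₀)) hε'
    (fun i o => z i o
      + (if ∃ k, a' k = i ∧ ob' (k - 1) = o then z (a' k₀) (ob' k₀) else 0)
      - (if ∃ k, a' k = i ∧ ob' k = o then z (a' k₀) (ob' k₀) else 0))
    (fun i o => rfl)
  exact hzND _ hyB hyR
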